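/- Let ⟨G,m⟩ be a gain graph with G connected, let T be a spanning tree of G with a chosen root vertex u, for each v ∈ V let m(v,T) ∈ ℤ² be the net gain along the unique path in T from u to v, and for each edge e directed from v to w define the T-gain m_T(e) = m(v,T) + m(e) − m(w,T). Fix real numbers x, y₁, y₂, let L be the 2×2 real matrix with rows (x, 0) and (y₁, y₂), let p : V → ℝ² be any placement, and define p' : V → ℝ² by p'(v) = p(v) + m(v,T)·L. Then the rigidity matrices R_x(⟨G,m⟩,p) and R_x(⟨G,m_T⟩,p') have equal rank. -/

import Mathlib

/-! ### Multigraphs: finite vertex set `V`, finite edge set `E`; each edge `e` has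
endpoints `src e` and `dst e` (loops and parallel edges are allowed). -/

structure Multigraph (V E : Type) where
  src : E → V
  dst : E → V

namespace Multigraph

variable {V E : Type}

/-- `i(X)`: the number of edges both of whose endpoints lie in `X`. -/
def iCount [Fintype E] [DecidableEq V] (G : Multigraph V E) (X : Finset V) : ℕ :=
  (Finset.univ.filter fun e => G.src e ∈ X ∧ G.dst e ∈ X).card

/-- The degree of a vertex (a loop contributes 2). -/
def degree [Fintype E] [DecidableEq V] (G : Multigraph V E) (v : V) : ℕ :=
  (Finset.univ.filter fun e => G.src e = v).card +
    (Finset.univ.filter fun e => G.dst e = v).card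

/-- The set of neighbours of a vertex. -/
def neighborSet (G : Multigraph V E) (v : V) : Set V :=
  {w | ∃ e, (G.src e = v ∧ G.dst e = w) ∨ (G.src e = w ∧ G.dst e = v)}

/-- `(k,ℓ)`-sparsity: `i(X) ≤ k|X| − ℓ` for every `X ⊆ V` spanning at least one edge. -/
def Sparse [Fintype E] [DecidableEq V] (G : Multigraph V E) (k l : ℤ) : Prop :=
  ∀ X : Finset V, (∃ e, G.src e ∈ X ∧ G.dst e ∈ X) →
    (G.iCount X : ℤ) ≤ k * (X.card : ℤ) - l

/-- `(k,ℓ)`-tightness: `(k,ℓ)`-sparse and `|E| = k|V| − ℓ`. -/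
def Tight [Fintype V] [Fintype E] [DecidableEq V] (G : Multigraph V E) (k l : ℤ) : Prop :=
  G.Sparse k l ∧ (Fintype.card E : ℤ) = k * (Fintype.card V : ℤ) - l

/-- Delete a single edge. -/
def deleteEdge (G : Multigraph V E) (e₀ : E) : Multigraph V {e : E // e ≠ e₀} :=
  ⟨fun e => G.src e.1, fun e => G.dst e.1⟩

/-- Delete a vertex together with all edges incident to it. -/
def deleteVertex (G : Multigraph V E) (v : V) :
    Multigraph {w : V // w ≠ v} {e : E // G.src e ≠ v ∧ G.dst e ≠ v} :=
  ⟨fun e => ⟨G.src e.1, e.2.1⟩, fun e => ⟨G.dst e.1, e.2.2⟩⟩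

/-- Add one new edge with endpoints `u` and `w`. -/
def addEdge (G : Multigraph V E) (u w : V) : Multigraph V (E ⊕ Unit) :=
  ⟨Sum.elim G.src fun _ => u, Sum.elim G.dst fun _ => w⟩

/-- The subgraph induced by a set of vertices `X`. -/
def induce (G : Multigraph V E) (X : Finset V) :
    Multigraph {v : V // v ∈ X} {e : E // G.src e ∈ X ∧ G.dst e ∈ X} :=
  ⟨fun e => ⟨G.src e.1, e.2.1⟩, fun e => ⟨G.dst e.1, e.2.2⟩⟩

/-- `G` is a `P(2,1)`-graph: `(2,1)`-tight and some edge-deleted graph is `(2,2)`-tight. -/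
def IsP21 [Fintype V] [Fintype E] [DecidableEq V] [DecidableEq E] (G : Multigraph V E) : Prop :=
  G.Tight 2 1 ∧ ∃ e : E, (G.deleteEdge e).Tight 2 2

/-- `G` is a `(2,2)`-circuit: `|E| = 2|V| − 1` and every edge-deleted graph is `(2,2)`-tight. -/
def IsCircuit22 [Fintype V] [Fintype E] [DecidableEq V] [DecidableEq E]
    (G : Multigraph V E) : Prop :=
  (Fintype.card E : ℤ) = 2 * (Fintype.card V : ℤ) - 1 ∧
    ∀ e : E, (G.deleteEdge e).Tight 2 2

/-- `X` is an over-critical set (`i(X) = 2|X| − 1`) of minimum cardinality. -/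
def IsMinOverCritical [Fintype E] [DecidableEq V] (G : Multigraph V E) (X : Finset V) : Prop :=
  (G.iCount X : ℤ) = 2 * (X.card : ℤ) - 1 ∧
    ∀ Y : Finset V, (G.iCount Y : ℤ) = 2 * (Y.card : ℤ) - 1 → X.card ≤ Y.card

/-- `G` is (a copy of) `K₂³`: two distinct vertices joined by three parallel edges. -/
def IsK23 [Fintype E] (G : Multigraph V E) : Prop :=
  ∃ a b : V, a ≠ b ∧ (∀ v : V, v = a ∨ v = b) ∧ Fintype.card E = 3 ∧
    ∀ e : E, (G.src e = a ∧ G.dst e = b) ∨ (G.src e = b ∧ G.dst e = a)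

/-- Adjacency via an edge belonging to the edge subset `F`. -/
def AdjOn (G : Multigraph V E) (F : Set E) (u w : V) : Prop :=
  ∃ e ∈ F, (G.src e = u ∧ G.dst e = w) ∨ (G.src e = w ∧ G.dst e = u)

/-- Connectivity of the multigraph. -/
def Connected (G : Multigraph V E) : Prop :=
  Nonempty V ∧ ∀ u w : V, Relation.ReflTransGen (G.AdjOn Set.univ) u w

/-- 2-edge-connectivity: connected, and still connected after deleting any one edge. -/
def TwoEdgeConnected (G : Multigraph V E) : Prop :=
  G.Connected ∧ ∀ e₀ : E, ∀ u w : V, Relation.ReflTransGen (G.AdjOn {e | e ≠ e₀}) u w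

/-- Adjacency inside the induced subgraph on the vertex set `X`. -/
def AdjIn (G : Multigraph V E) (X : Set V) (u w : V) : Prop :=
  u ∈ X ∧ w ∈ X ∧ ∃ e, (G.src e = u ∧ G.dst e = w) ∨ (G.src e = w ∧ G.dst e = u)

/-- Connectivity of the induced subgraph on the vertex set `X`. -/
def ConnectedOn (G : Multigraph V E) (X : Set V) : Prop :=
  ∀ u ∈ X, ∀ w ∈ X, Relation.ReflTransGen (G.AdjIn X) u w

/-- `T` is the edge set of a spanning tree of `G`:
the spanning subgraph with edge set `T` is connected and `|T| = |V| − 1`. -/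
def IsSpanningTree [Fintype V] (G : Multigraph V E) (T : Finset E) : Prop :=
  (∀ u w : V, Relation.ReflTransGen (G.AdjOn (T : Set E)) u w) ∧ T.card + 1 = Fintype.card V

/-- `M` is the edge set of a spanning connected map-graph of `G`:
the spanning subgraph with edge set `M` is connected and has exactly `|V|` edges
(equivalently, it is connected with exactly one cycle). -/
def IsConnectedSpanningMapGraph [Fintype V] (G : Multigraph V E) (M : Finset E) : Prop :=
  (∀ u w : V, Relation.ReflTransGen (G.AdjOn (M : Set E)) u w) ∧ M.card = Fintype.card V

/-- `(X, F)` describes a subgraph of `G`: every edge of `F` has both endpoints in `X`. -/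
def IsSubgraphOn (G : Multigraph V E) (X : Finset V) (F : Finset E) : Prop :=
  ∀ e ∈ F, G.src e ∈ X ∧ G.dst e ∈ X

end Multigraph

/-! ### Gain graphs: multigraphs with directed edges labelled by gains in `ℤ²`. -/

structure GainGraph (V E : Type) where
  src : E → V
  dst : E → V
  gain : E → ℤ × ℤ

namespace GainGraph

variable {V E : Type}

/-- The underlying multigraph of a gain graph. -/
def toMultigraph (G : GainGraph V E) : Multigraph V E := ⟨G.src, G.dst⟩

/-- `Walk G F u w g`: there is a walk from `u` to `w` using only edges in `F`
whose net gain (traversing an edge against its direction contributes `−m(e)`) is `g`. -/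
inductive Walk (G : GainGraph V E) (F : Set E) : V → V → ℤ × ℤ → Prop
  | nil (v : V) : Walk G F v v 0
  | fwd {u : V} {g : ℤ × ℤ} {e : E} (he : e ∈ F) (h : Walk G F u (G.src e) g) :
      Walk G F u (G.dst e) (g + G.gain e)
  | bwd {u : V} {g : ℤ × ℤ} {e : E} (he : e ∈ F) (h : Walk G F u (G.dst e) g) :
      Walk G F u (G.src e) (g - G.gain e)

/-- The subgraph with edge set `F` is constructive: some closed walk has nonzero net gain. -/
def Constructive (G : GainGraph V E) (F : Set E) : Prop :=
  ∃ (v : V) (g : ℤ × ℤ), G.Walk F v v g ∧ g ≠ 0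

/-- The subgraph with edge set `F` is `x`-constructive:
some closed walk has net gain with nonzero first coordinate. -/
def XConstructive (G : GainGraph V E) (F : Set E) : Prop :=
  ∃ (v : V) (g : ℤ × ℤ), G.Walk F v v g ∧ g.1 ≠ 0

/-- The gain assignment is `T_x`-constructive: every subgraph `(X,F)` with
`|F| = 2|X| − 2` is constructive, and every one with `|F| = 2|X| − 1` is `x`-constructive. -/
def TxConstructive (G : GainGraph V E) : Prop :=
  (∀ (X : Finset V) (F : Finset E), G.toMultigraph.IsSubgraphOn X F →
      (F.card : ℤ) = 2 * (X.card : ℤ) - 2 → G.Constructive (F : Set E)) ∧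
  (∀ (X : Finset V) (F : Finset E), G.toMultigraph.IsSubgraphOn X F →
      (F.card : ℤ) = 2 * (X.card : ℤ) - 1 → G.XConstructive (F : Set E))

/-- For the lattice matrix `L` with rows `(x,0)` and `(y₁,y₂)`, the vector
`p(src e) − p(dst e) − m_e·L ∈ ℝ²`. -/
noncomputable def edgeVec (G : GainGraph V E) (x y1 y2 : ℝ) (p : V → ℝ × ℝ) (e : E) : ℝ × ℝ :=
  ((p (G.src e)).1 - (p (G.dst e)).1 - (((G.gain e).1 : ℝ) * x + ((G.gain e).2 : ℝ) * y1),
    (p (G.src e)).2 - (p (G.dst e)).2 - ((G.gain e).2 : ℝ) * y2)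

/-- The rigidity matrix `R_x(⟨G,m⟩,p)` on the `x`-variable torus: rows indexed by edges,
columns indexed by the two coordinates of each vertex (`Sum.inl` = first coordinates,
`Sum.inr ∘ Sum.inl` = second coordinates) together with one final lattice column. -/
noncomputable def rigidityMatrix [DecidableEq V] (G : GainGraph V E) (x y1 y2 : ℝ)
    (p : V → ℝ × ℝ) : Matrix E (V ⊕ V ⊕ Unit) ℝ :=
  Matrix.of fun e c =>
    Sum.elim
      (fun v => (if G.src e = v then (G.edgeVec x y1 y2 p e).1 else 0) -
        (if G.dst e = v then (G.edgeVec x y1 y2 p e).1 else 0))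
      (Sum.elim
        (fun v => (if G.src e = v then (G.edgeVec x y1 y2 p e).2 else 0) -
          (if G.dst e = v then (G.edgeVec x y1 y2 p e).2 else 0))
        (fun _ => ((G.gain e).1 : ℝ) * (G.edgeVec x y1 y2 p e).1)) c

/-- Delete a vertex together with all edges incident to it. -/
def deleteVertex (G : GainGraph V E) (v : V) :
    GainGraph {w : V // w ≠ v} {e : E // G.src e ≠ v ∧ G.dst e ≠ v} :=
  ⟨fun e => ⟨G.src e.1, e.2.1⟩, fun e => ⟨G.dst e.1, e.2.2⟩, fun e => G.gain e.1⟩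

/-- Add one new edge directed from `u` to `w` with gain `g`. -/
def addEdge (G : GainGraph V E) (u w : V) (g : ℤ × ℤ) : GainGraph V (E ⊕ Unit) :=
  ⟨Sum.elim G.src fun _ => u, Sum.elim G.dst fun _ => w, Sum.elim G.gain fun _ => g⟩

end GainGraph

/-!
Switching the gains by a potential `pot` (so `m'(e) = pot (src e) + m(e) − pot (dst e)`) while
translating each vertex by `pot v · L` leaves every edge vector `p(src e) − p(dst e) − m(e)·L`
unchanged. Hence the two rigidity matrices agree on all vertex columns, and their lattice columns
differ by `(pot (src e) − pot (dst e))ₓ · (edge vector)ₓ`, which is the combination of the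
first-coordinate vertex columns with coefficients `(pot v)ₓ`. Adding it is the column operation
`R ↦ R (1 + a bᵀ)` with `b ⬝ a = 0`, an invertible matrix, so the rank is preserved.
-/

namespace Matrix

variable {m n R : Type*} [Fintype n] [DecidableEq n] [CommRing R]

theorem det_one_add_vecMulVec (a b : n → R) : (1 + vecMulVec a b).det = 1 + b ⬝ᵥ a := by
  rw [vecMulVec_eq Unit, det_one_add_replicateCol_mul_replicateRow]

theorem rank_mul_one_add_vecMulVec [Fintype m] (A : Matrix m n R) (a b : n → R)
    (h : IsUnit (1 + b ⬝ᵥ a)) : (A * (1 + vecMulVec a b)).rank = A.rank :=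
  rank_mul_eq_left_of_isUnit_det _ _ (by rwa [det_one_add_vecMulVec])

end Matrix

namespace GainGraph

open Matrix

variable {V E : Type} (G : GainGraph V E) (pot : V → ℤ × ℤ) (x y1 y2 : ℝ) (p : V → ℝ × ℝ)

@[simps]
def switch : GainGraph V E :=
  ⟨G.src, G.dst, fun e => pot (G.src e) + G.gain e - pot (G.dst e)⟩

def shiftPlacement : V → ℝ × ℝ :=
  fun v => ((p v).1 + (((pot v).1 : ℝ) * x + ((pot v).2 : ℝ) * y1),
    (p v).2 + ((pot v).2 : ℝ) * y2)

theorem edgeVec_switch :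
    (G.switch pot).edgeVec x y1 y2 (shiftPlacement pot x y1 y2 p) = G.edgeVec x y1 y2 p := by
  funext e
  simp only [edgeVec, switch, shiftPlacement, Prod.fst_add, Prod.snd_add, Prod.fst_sub,
    Prod.snd_sub, Int.cast_add, Int.cast_sub, Prod.mk.injEq]
  constructor <;> ring

def xPotVec : V ⊕ V ⊕ Unit → ℝ :=
  Sum.elim (fun v => ((pot v).1 : ℝ)) 0

variable [DecidableEq V]

theorem rigidityMatrix_mulVec_xPotVec [Fintype V] (e : E) :
    (G.rigidityMatrix x y1 y2 p *ᵥ xPotVec pot) e =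
      (G.edgeVec x y1 y2 p e).1 * ((pot (G.src e)).1 - (pot (G.dst e)).1) := by
  simp [mulVec, dotProduct, rigidityMatrix, xPotVec, Fintype.sum_sum_type, sub_mul,
    Finset.sum_sub_distrib, ite_mul, mul_sub]

theorem rigidityMatrix_switch [Fintype V] :
    (G.switch pot).rigidityMatrix x y1 y2 (shiftPlacement pot x y1 y2 p) =
      G.rigidityMatrix x y1 y2 p *
        (1 + vecMulVec (xPotVec pot) (Pi.single (Sum.inr (Sum.inr ())) 1)) := by
  ext e (v | v | ⟨⟩)
  all_goals
    rw [Matrix.mul_add, Matrix.mul_one, mul_vecMulVec, Matrix.add_apply, vecMulVec_apply,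
      rigidityMatrix_mulVec_xPotVec]
    simp only [rigidityMatrix, of_apply, Sum.elim_inl, Sum.elim_inr, edgeVec_switch, switch_src,
      switch_dst, switch_gain]
  iterate 2 · simp
  · simp only [Pi.single_eq_same, Prod.fst_add, Prod.fst_sub, Int.cast_add, Int.cast_sub]
    ring

theorem rank_rigidityMatrix_switch [Fintype V] [Fintype E] :
    ((G.switch pot).rigidityMatrix x y1 y2 (shiftPlacement pot x y1 y2 p)).rank =
      (G.rigidityMatrix x y1 y2 p).rank := by
  rw [rigidityMatrix_switch]
  refine rank_mul_one_add_vecMulVec _ _ _ ?_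
  simp [xPotVec]

end GainGraph

theorem statement_17_general {V E : Type} [Fintype V] [Fintype E] [DecidableEq V]
    (G : GainGraph V E) (pot : V → ℤ × ℤ) (x y1 y2 : ℝ) (p : V → ℝ × ℝ) :
    (G.rigidityMatrix x y1 y2 p).rank =
      (GainGraph.rigidityMatrix
        ⟨G.src, G.dst, fun e => pot (G.src e) + G.gain e - pot (G.dst e)⟩ x y1 y2
        (fun v => ((p v).1 + (((pot v).1 : ℝ) * x + ((pot v).2 : ℝ) * y1),
                   (p v).2 + ((pot v).2 : ℝ) * y2))).rank :=
  (G.rank_rigidityMatrix_switch pot x y1 y2 p).symm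

/-- the `T`-gain procedure preserves the rank of the rigidity
matrix. Here `pot v = m(v,T)` is the net gain along the unique path in the spanning
tree `T` from the root `u` to `v` (characterised by `pot u = 0` together with
compatibility along the tree edges), the `T`-gains are
`m_T(e) = m(src e,T) + m(e) − m(dst e,T)`, and `p'(v) = p(v) + m(v,T)·L`. -/
theorem statement_17 {V E : Type} [Fintype V] [Fintype E] [DecidableEq V] [DecidableEq E]
    (G : GainGraph V E) (T : Finset E) (hT : G.toMultigraph.IsSpanningTree T)
    (u : V) (pot : V → ℤ × ℤ) (hu : pot u = 0)
    (hpot : ∀ e ∈ T, pot (G.dst e) = pot (G.src e) + G.gain e)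
    (x y1 y2 : ℝ) (p : V → ℝ × ℝ) :
    (G.rigidityMatrix x y1 y2 p).rank =
      (GainGraph.rigidityMatrix
        ⟨G.src, G.dst, fun e => pot (G.src e) + G.gain e - pot (G.dst e)⟩ x y1 y2
        (fun v => ((p v).1 + (((pot v).1 : ℝ) * x + ((pot v).2 : ℝ) * y1),
                   (p v).2 + ((pot v).2 : ℝ) * y2))).rank :=
  statement_17_general G pot x y1 y2 p
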